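/- arXiv:1012.1389 — 3 statements merged into one kernel-verified Lean document; each statement's English description precedes it below -/
import Mathlib

section
/- Let A and B be Banach algebras with B possessing a nonzero character. If the projective tensor product A ⊗̂ B is amenable, then A is amenable. -/
open Filter Topology MulOpposite

/-- A Banach `A`-bimodule structure on the Banach space `X`:
`L a x = a • x` (left action), `R a x = x • a` (right action),
given as continuous bilinear maps. -/
structure BanachBimodule (A X : Type*) [NonUnitalNormedRing A] [NormedSpace ℂ A]
    [NormedAddCommGroup X] [NormedSpace ℂ X] where
  L : A →L[ℂ] X →L[ℂ] X
  R : A →L[ℂ] X →L[ℂ] X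
  L_mul : ∀ a b : A, L (a * b) = (L a).comp (L b)
  R_mul : ∀ a b : A, R (a * b) = (R b).comp (R a)
  LR_comm : ∀ (a b : A) (x : X), R b (L a x) = L a (R b x)

/-- `D : A → X*` is a derivation into the dual Banach bimodule of `X`, written
pointwise: `D(ab) = a·D(b) + D(a)·b` where `(a·f)(x) = f(x·a)`, `(f·a)(x) = f(a·x)`. -/
def IsDualDerivation {A X : Type*} [NonUnitalNormedRing A] [NormedSpace ℂ A]
    [NormedAddCommGroup X] [NormedSpace ℂ X] (σ : BanachBimodule A X)
    (D : A →L[ℂ] (X →L[ℂ] ℂ)) : Prop :=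
  ∀ (a b : A) (x : X), D (a * b) x = D b (σ.R a x) + D a (σ.L b x)

/-- `D` is inner: `D a = a·f − f·a` for some `f ∈ X*`. -/
def IsInnerDualDerivation {A X : Type*} [NonUnitalNormedRing A] [NormedSpace ℂ A]
    [NormedAddCommGroup X] [NormedSpace ℂ X] (σ : BanachBimodule A X)
    (D : A →L[ℂ] (X →L[ℂ] ℂ)) : Prop :=
  ∃ f : X →L[ℂ] ℂ, ∀ (a : A) (x : X), D a x = f (σ.R a x) - f (σ.L a x)

/-- A Banach algebra is amenable if every continuous derivation into every dual
Banach bimodule is inner. -/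
def Amenable (A : Type*) [NonUnitalNormedRing A] [NormedSpace ℂ A] : Prop :=
  ∀ (X : Type) (_ : NormedAddCommGroup X) (_ : NormedSpace ℂ X) (_ : CompleteSpace X)
    (σ : BanachBimodule A X) (D : A →L[ℂ] (X →L[ℂ] ℂ)),
    IsDualDerivation σ D → IsInnerDualDerivation σ D

/-- Weak amenability: every continuous derivation `D : A → A*` into the dual
bimodule (`(a·f)(x) = f(xa)`, `(f·a)(x) = f(ax)`) is inner. -/
def WeaklyAmenable (A : Type*) [NonUnitalNormedRing A] [NormedSpace ℂ A] : Prop :=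
  ∀ D : A →L[ℂ] (A →L[ℂ] ℂ),
    (∀ a b x : A, D (a * b) x = D b (x * a) + D a (b * x)) →
    ∃ f : A →L[ℂ] ℂ, ∀ a x : A, D a x = f (x * a) - f (a * x)

/-- A bounded net in a normed space. -/
structure BddNet (X : Type*) [Norm X] where
  ι : Type
  [dir : SemilatticeSup ι]
  [ne : Nonempty ι]
  z : ι → X
  C : ℝ
  bdd : ∀ i, ‖z i‖ ≤ C

/-- The `atTop` filter of the (directed) index of a bounded net. -/
def BddNet.filter {X : Type*} [Norm X] (S : BddNet X) : Filter S.ι :=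
  letI := S.dir; Filter.atTop

/-- The bounded net `S` is a two-sided bounded approximate identity for `A`. -/
def IsBAI {A : Type*} [NonUnitalNormedRing A] (S : BddNet A) : Prop :=
  ∀ a : A, Tendsto (fun i => a * S.z i) S.filter (nhds a) ∧
           Tendsto (fun i => S.z i * a) S.filter (nhds a)

/-- `A` has a (two-sided) bounded approximate identity. -/
def HasBAI (A : Type*) [NonUnitalNormedRing A] : Prop := ∃ S : BddNet A, IsBAI S

/-- `T`, together with the continuous bilinear map `ι`, is (a realization of) the
projective tensor product `A ⊗̂ B` of the Banach algebras `A` and `B`: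
`ι` is multiplicative ((a⊗b)(c⊗d) = ac⊗bd), satisfies the cross-norm estimate,
has dense linear span, and has the universal (norm-decreasing lifting) property
of the projective tensor norm. -/
structure IsProjTensorProduct (A B T : Type*)
    [NonUnitalNormedRing A] [NormedSpace ℂ A] [NonUnitalNormedRing B] [NormedSpace ℂ B]
    [NonUnitalNormedRing T] [NormedSpace ℂ T] [CompleteSpace T] where
  ι : A →L[ℂ] B →L[ℂ] T
  norm_ι : ∀ a b, ‖ι a b‖ ≤ ‖a‖ * ‖b‖
  ι_mul : ∀ (a c : A) (b d : B), ι a b * ι c d = ι (a * c) (b * d)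
  dense_span : Dense (Submodule.span ℂ (Set.range fun p : A × B => ι p.1 p.2) : Set T)
  lift : ∀ (E : Type) (_ : NormedAddCommGroup E) (_ : NormedSpace ℂ E) (_ : CompleteSpace E)
    (φ : A →L[ℂ] B →L[ℂ] E), ∃ Φ : T →L[ℂ] E, (∀ a b, Φ (ι a b) = φ a b) ∧ ‖Φ‖ ≤ ‖φ‖


/-
The map `θ = id ⊗ φ : A ⊗̂ B → A`, `a ⊗ b ↦ φ(b) a`, is a continuous algebra homomorphism,
surjective because `θ(a ⊗ b₀) = a` once `φ(b₀) = 1`, and amenability passes to such images: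
an `A`-bimodule `X` and a derivation `D : A → X*` pull back along `θ` to a `T`-bimodule and a
derivation `D ∘ θ`, and an implementing functional for `D ∘ θ` implements `D`.
Since `θ` cannot be lifted into `A` itself (the universal property of `T` only reaches Banach
spaces in `Type`), `θ` is only ever used composed with the maps `L`, `R`, `D` into spaces of
operators on `X`.
-/

open ContinuousLinearMap

namespace IsProjTensorProduct

variable {A B T : Type*} [NonUnitalNormedRing A] [NormedSpace ℂ A]
  [NonUnitalNormedRing B] [NormedSpace ℂ B]
  [NonUnitalNormedRing T] [NormedSpace ℂ T] [CompleteSpace T]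
  (P : IsProjTensorProduct A B T)

theorem ext {Y : Type*} [NormedAddCommGroup Y] [NormedSpace ℂ Y] {f g : T →L[ℂ] Y}
    (h : ∀ a b, f (P.ι a b) = g (P.ι a b)) : f = g :=
  ext_on P.dense_span <| by rintro _ ⟨⟨a, b⟩, rfl⟩; exact h a b

theorem ext₂ {Y : Type*} [NormedAddCommGroup Y] [NormedSpace ℂ Y] {F G : T →L[ℂ] T →L[ℂ] Y}
    (h : ∀ a b c d, F (P.ι a b) (P.ι c d) = G (P.ι a b) (P.ι c d)) : F = G :=
  P.ext fun a b => P.ext fun c d => h a b c d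

variable (φ : B →L[ℂ] ℂ) {E : Type} [NormedAddCommGroup E] [NormedSpace ℂ E] [CompleteSpace E]

/-- `liftChar φ u = u ∘ (id ⊗ φ)`. -/
noncomputable def liftChar (u : A →L[ℂ] E) : T →L[ℂ] E :=
  (P.lift E inferInstance inferInstance inferInstance ((smulRightL ℂ B E φ).comp u)).choose

@[simp]
theorem liftChar_ι (u : A →L[ℂ] E) (a : A) (b : B) : P.liftChar φ u (P.ι a b) = φ b • u a := by
  simpa [liftChar] using (P.lift E inferInstance inferInstance inferInstance
    ((smulRightL ℂ B E φ).comp u)).choose_spec.1 a b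

variable [IsScalarTower ℂ T T] [SMulCommClass ℂ T T] {φ} (hφ : ∀ b c : B, φ (b * c) = φ b * φ c)
  {X : Type} [NormedAddCommGroup X] [NormedSpace ℂ X] [CompleteSpace X] (σ : BanachBimodule A X)
include hφ

theorem liftChar_mul {E₁ E₂ : Type} [NormedAddCommGroup E₁] [NormedSpace ℂ E₁] [CompleteSpace E₁]
    [NormedAddCommGroup E₂] [NormedSpace ℂ E₂] [CompleteSpace E₂]
    (F : E₁ →L[ℂ] E₂ →L[ℂ] E) {u : A →L[ℂ] E₁} {v : A →L[ℂ] E₂} {w : A →L[ℂ] E}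
    (h : ∀ a c, w (a * c) = F (u a) (v c)) (t s : T) :
    P.liftChar φ w (t * s) = F (P.liftChar φ u t) (P.liftChar φ v s) := by
  have := P.ext₂ (F := (compL ℂ T T E (P.liftChar φ w)).comp (mul ℂ T))
    (G := F.bilinearComp (P.liftChar φ u) (P.liftChar φ v))
    fun a b c d => by simp [ι_mul, hφ, h, smul_smul, mul_comm]
  simpa using congr($this t s)

noncomputable def comapBimodule : BanachBimodule T X where
  L := P.liftChar φ σ.L
  R := P.liftChar φ σ.R
  L_mul := P.liftChar_mul hφ (compL ℂ X X X) σ.L_mul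
  R_mul := P.liftChar_mul hφ (compL ℂ X X X).flip σ.R_mul
  LR_comm t s x := by
    have := P.ext₂ (F := (compL ℂ X X X).flip.bilinearComp (P.liftChar φ σ.L) (P.liftChar φ σ.R))
      (G := (compL ℂ X X X).bilinearComp (P.liftChar φ σ.L) (P.liftChar φ σ.R))
      fun a b c d => by ext y; simp [σ.LR_comm, smul_smul, mul_comm]
    simpa using congr($this t s x)

theorem isDualDerivation_comapBimodule {D : A →L[ℂ] X →L[ℂ] ℂ} (hD : IsDualDerivation σ D) :
    IsDualDerivation (P.comapBimodule hφ σ) (P.liftChar φ D) := by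
  have := P.ext₂ (F := (compL ℂ T T _ (P.liftChar φ D)).comp (mul ℂ T))
    (G := (compL ℂ X X ℂ).flip.bilinearComp (P.liftChar φ σ.R) (P.liftChar φ D) +
      (compL ℂ X X ℂ).bilinearComp (P.liftChar φ D) (P.liftChar φ σ.L))
    fun a b c d => by ext x; simp [ι_mul, hφ, hD a c x, mul_add, smul_smul, mul_comm]
  intro t s x
  simpa [comapBimodule] using congr($this t s x)

end IsProjTensorProduct

theorem stmt1_general {A B T : Type*} [NonUnitalNormedRing A] [NormedSpace ℂ A] [NonUnitalNormedRing B] [NormedSpace ℂ B] [NonUnitalNormedRing T] [NormedSpace ℂ T] [IsScalarTower ℂ T T] [SMulCommClass ℂ T T] [CompleteSpace T]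
    (P : IsProjTensorProduct A B T)
    (φ : B →L[ℂ] ℂ) (hφ_mul : ∀ b c : B, φ (b * c) = φ b * φ c) (hφ_ne : φ ≠ 0)
    (hT : Amenable T) : Amenable A := by
  obtain ⟨b₀, hb₀⟩ : ∃ b₀, φ b₀ = 1 :=
    LinearMap.surjective_iff_ne_zero.mpr (by exact_mod_cast hφ_ne) (1 : ℂ)
  intro X _ _ hX σ D hD
  obtain ⟨f, hf⟩ := hT X _ _ hX (P.comapBimodule hφ_mul σ) (P.liftChar φ D)
    (P.isDualDerivation_comapBimodule hφ_mul σ hD)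
  exact ⟨f, fun a x => by simpa [IsProjTensorProduct.comapBimodule, hb₀] using hf (P.ι a b₀) x⟩

/-- if `B` has a nonzero character and `A ⊗̂ B` is amenable,
then `A` is amenable. -/
theorem stmt1 {A B T : Type*} [NonUnitalNormedRing A] [NormedSpace ℂ A] [IsScalarTower ℂ A A] [SMulCommClass ℂ A A] [CompleteSpace A] [NonUnitalNormedRing B] [NormedSpace ℂ B] [IsScalarTower ℂ B B] [SMulCommClass ℂ B B] [CompleteSpace B] [NonUnitalNormedRing T] [NormedSpace ℂ T] [IsScalarTower ℂ T T] [SMulCommClass ℂ T T] [CompleteSpace T]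
    (P : IsProjTensorProduct A B T)
    (φ : B →L[ℂ] ℂ) (hφ_mul : ∀ b c : B, φ (b * c) = φ b * φ c) (hφ_ne : φ ≠ 0)
    (hT : Amenable T) : Amenable A :=
  stmt1_general P φ hφ_mul hφ_ne hT
end

section
/- Let A be a Banach algebra such that A ⊗̂ A^{op} has a bounded approximate identity, and suppose that each of the locally convex topologies on A defined by the seminorm families ρ_a(b) = ‖ab‖ (a ∈ A) and γ_a(b) = ‖ba‖ (a ∈ A) is stronger than the weak topology on A. Then A has a two-sided bounded approximate identity. -/
open Filter Topology MulOpposite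

/-!
The multiplication map `a ⊗ b ↦ ab` extends to a bounded operator `π : A ⊗̂ Aᵒᵖ → A`: the forms
`(a, b) ↦ f (a · unop b)`, `f ∈ A*`, lift to `A ⊗̂ Aᵒᵖ`, and the set of tensors they represent by an
element of `A` is a closed subspace (completeness of `A`) containing the dense span of the
elementary tensors. Since `π((a ⊗ b) u) = a π(u) b`, the image `zᵢ = π(eᵢ)` of a bounded
approximate identity satisfies `a zᵢ b → ab` in norm: `zᵢ a → a` for the seminorms `ρ` and
`a zᵢ → a` for the seminorms `γ`, hence weakly by hypothesis. By Mazur's theorem, applied in a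
finite power of `A`, convex combinations of the `zᵢ` approximate a unit on any finite set
simultaneously, and these form a bounded two-sided approximate identity.
-/

instance BddNet.filter_neBot {X : Type*} [Norm X] (S : BddNet X) : S.filter.NeBot :=
  let _ := S.dir
  have _ := S.ne
  atTop_neBot

theorem Convex.mem_closure_of_forall_tendsto_dual {𝕜 E : Type*} [RCLike 𝕜]
    [NormedAddCommGroup E] [NormedSpace 𝕜 E] [NormedSpace ℝ E] [IsScalarTower ℝ 𝕜 E]
    {s : Set E} (hs : Convex ℝ s) {ι : Type*} {l : Filter ι} [l.NeBot] {x : ι → E}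
    (hx : ∀ i, x i ∈ s) {y : E}
    (h : ∀ f : StrongDual 𝕜 E, Tendsto (fun i => f (x i)) l (𝓝 (f y))) :
    y ∈ closure s := by
  have hweak : toWeakSpace 𝕜 E y ∈ closure (toWeakSpace 𝕜 E '' s) := by
    refine mem_closure_of_tendsto (b := l) (f := fun i => toWeakSpace 𝕜 E (x i)) ?_
      (Eventually.of_forall fun i => Set.mem_image_of_mem _ (hx i))
    exact (WeakBilin.tendsto_iff_forall_eval_tendsto _
      (separatingDual_iff_injective.mp inferInstance)).2 h
  rwa [← hs.toWeakSpace_closure 𝕜, (toWeakSpace 𝕜 E).injective.mem_set_image] at hweak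

theorem tendsto_dual_pi {𝕜 : Type*} [NontriviallyNormedField 𝕜] {κ : Type*} [Fintype κ]
    {E : κ → Type*} [∀ j, NormedAddCommGroup (E j)] [∀ j, NormedSpace 𝕜 (E j)]
    {ι : Type*} {l : Filter ι} {x : ι → Π j, E j} {y : Π j, E j}
    (h : ∀ j (f : StrongDual 𝕜 (E j)), Tendsto (fun i => f (x i j)) l (𝓝 (f (y j))))
    (g : StrongDual 𝕜 (Π j, E j)) : Tendsto (fun i => g (x i)) l (𝓝 (g y)) := by
  classical
  have hsum (v : Π j, E j) : g v = ∑ j, g.comp (.single 𝕜 E j) (v j) :=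
    (ContinuousLinearMap.sum_comp_single 𝕜 E g v).symm
  simp only [hsum]
  exact tendsto_finsetSum _ fun j _ => h j _

theorem tendsto_dual_of_seminormFamily_topology_le {𝕜 E ι' : Type*}
    [NontriviallyNormedField 𝕜] [NormedAddCommGroup E] [NormedSpace 𝕜 E] (p : SeminormFamily 𝕜 E ι')
    (hp : p.moduleFilterBasis.topology ≤
      TopologicalSpace.induced (fun (a : E) (f : StrongDual 𝕜 E) => f a) Pi.topologicalSpace)
    {ι : Type*} {l : Filter ι} {x : ι → E} {y : E}
    (hx : ∀ j, Tendsto (fun i => p j (x i - y)) l (𝓝 0)) (f : StrongDual 𝕜 E) :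
    Tendsto (fun i => f (x i)) l (𝓝 (f y)) := by
  have hf : Continuous[p.moduleFilterBasis.topology, _] f := continuous_le_dom hp <|
    @Continuous.comp E (StrongDual 𝕜 E → 𝕜) 𝕜
      (.induced (fun (a : E) (g : StrongDual 𝕜 E) => g a) Pi.topologicalSpace)
      Pi.topologicalSpace _ (fun a g => g a) (fun g => g f) (continuous_apply f)
      continuous_induced_dom
  let _ : TopologicalSpace E := p.moduleFilterBasis.topology
  have hxy : Tendsto x l (𝓝 y) :=
    (WithSeminorms.tendsto_nhds ⟨rfl⟩ x y).2 fun j ε hε => (hx j).eventually (Iio_mem_nhds hε)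
  exact (hf.tendsto y).comp hxy

section ApproximateIdentity

variable {A : Type*} [NonUnitalNormedRing A] [NormedSpace ℂ A] [IsScalarTower ℂ A A]
  [SMulCommClass ℂ A A]

theorem exists_mem_convexHull_forall_norm_mul_sub_lt {ι : Type*} {l : Filter ι} [l.NeBot]
    {z : ι → A}
    (h_mul_z : ∀ (f : StrongDual ℂ A) a, Tendsto (fun i => f (a * z i)) l (𝓝 (f a)))
    (h_z_mul : ∀ (f : StrongDual ℂ A) a, Tendsto (fun i => f (z i * a)) l (𝓝 (f a)))
    (F : Finset A) {ε : ℝ} (hε : 0 < ε) :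
    ∃ w ∈ convexHull ℝ (Set.range z), ∀ a ∈ F, ‖a * w - a‖ < ε ∧ ‖w * a - a‖ < ε := by
  let L : A →L[ℂ] (F ⊕ F → A) := ContinuousLinearMap.pi <| Sum.elim
    (fun a => ContinuousLinearMap.mul ℂ A a) (fun a => (ContinuousLinearMap.mul ℂ A).flip a)
  let c : F ⊕ F → A := Sum.elim (↑) (↑)
  have hc : c ∈ closure (L '' convexHull ℝ (Set.range z)) := by
    refine ((convex_convexHull ℝ _).linear_image (L.toLinearMap.restrictScalars ℝ))
      |>.mem_closure_of_forall_tendsto_dual (𝕜 := ℂ) (l := l)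
        (fun i => ⟨z i, subset_convexHull ℝ _ (Set.mem_range_self i), rfl⟩)
        (tendsto_dual_pi ?_)
    rintro (a | a) f
    exacts [h_mul_z f a, h_z_mul f a]
  obtain ⟨_, ⟨w, hw, rfl⟩, hdist⟩ := Metric.mem_closure_iff.1 hc ε hε
  rw [dist_comm, dist_eq_norm] at hdist
  exact ⟨w, hw, fun a ha => ⟨(norm_le_pi_norm (L w - c) (.inl ⟨a, ha⟩)).trans_lt hdist,
    (norm_le_pi_norm (L w - c) (.inr ⟨a, ha⟩)).trans_lt hdist⟩⟩

section Net

variable {ι : Type*} {l : Filter ι} {e : ι → A}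

theorem isClosed_setOf_tendsto_mul_right {C : ℝ} (he : ∀ i, ‖e i‖ ≤ C) :
    IsClosed {a : A | Tendsto (fun i => a * e i) l (𝓝 a)} := by
  have : Equicontinuous fun i (a : A) => a * e i :=
    (NormedSpace.equicontinuous_TFAE fun i => (ContinuousLinearMap.mul ℂ A).flip (e i)).out 3 1
      |>.1 (⟨C, fun i a => (norm_mul_le a (e i)).trans
        (by rw [mul_comm]; gcongr; exact he i)⟩ : ∃ C, ∀ i (a : A), ‖a * e i‖ ≤ C * ‖a‖)
  exact this.isClosed_setOfPred_tendsto continuous_id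

theorem isClosed_setOf_tendsto_mul_left {C : ℝ} (he : ∀ i, ‖e i‖ ≤ C) :
    IsClosed {a : A | Tendsto (fun i => e i * a) l (𝓝 a)} := by
  have : Equicontinuous fun i (a : A) => e i * a :=
    (NormedSpace.equicontinuous_TFAE fun i => ContinuousLinearMap.mul ℂ A (e i)).out 3 1
      |>.1 (⟨C, fun i a => (norm_mul_le (e i) a).trans (by gcongr; exact he i)⟩ :
        ∃ C, ∀ i (a : A), ‖e i * a‖ ≤ C * ‖a‖)
  exact this.isClosed_setOfPred_tendsto continuous_id

omit [SMulCommClass ℂ A A] in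
theorem convex_setOf_tendsto_mul_right (e : ι → A) :
    Convex ℝ {a : A | Tendsto (fun i => a * e i) l (𝓝 a)} := by
  intro a ha b hb s t _ _ _
  simp only [Set.mem_ofPred_eq, add_mul, smul_mul_assoc]
  exact (ha.const_smul s).add (hb.const_smul t)

omit [IsScalarTower ℂ A A] in
theorem convex_setOf_tendsto_mul_left (e : ι → A) :
    Convex ℝ {a : A | Tendsto (fun i => e i * a) l (𝓝 a)} := by
  intro a ha b hb s t _ _ _
  simp only [Set.mem_ofPred_eq, mul_add, mul_smul_comm]
  exact (ha.const_smul s).add (hb.const_smul t)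

variable {κ : Type*} {m : Filter κ} [m.NeBot] {z : κ → A} {C : ℝ}

theorem tendsto_mul_right_of_tendsto_dual
    (h_mul_z : ∀ (f : StrongDual ℂ A) a, Tendsto (fun j => f (a * z j)) m (𝓝 (f a)))
    (he : ∀ i, ‖e i‖ ≤ C) (hze : ∀ j, Tendsto (fun i => z j * e i) l (𝓝 (z j))) (a : A) :
    Tendsto (fun i => a * e i) l (𝓝 a) := by
  have hmem : ∀ j, a * z j ∈ {b : A | Tendsto (fun i => b * e i) l (𝓝 b)} := fun j => by
    simpa only [Set.mem_ofPred_eq, mul_assoc] using (hze j).const_mul a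
  have ha : a ∈ closure (convexHull ℝ (Set.range fun j => a * z j)) :=
    (convex_convexHull ℝ _).mem_closure_of_forall_tendsto_dual (𝕜 := ℂ)
      (fun j => subset_convexHull ℝ _ (Set.mem_range_self j)) (h_mul_z · a)
  exact closure_minimal (convexHull_min (Set.range_subset_iff.2 hmem)
    (convex_setOf_tendsto_mul_right e)) (isClosed_setOf_tendsto_mul_right he) ha

theorem tendsto_mul_left_of_tendsto_dual
    (h_z_mul : ∀ (f : StrongDual ℂ A) a, Tendsto (fun j => f (z j * a)) m (𝓝 (f a)))
    (he : ∀ i, ‖e i‖ ≤ C) (hez : ∀ j, Tendsto (fun i => e i * z j) l (𝓝 (z j))) (a : A) :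
    Tendsto (fun i => e i * a) l (𝓝 a) := by
  have hmem : ∀ j, z j * a ∈ {b : A | Tendsto (fun i => e i * b) l (𝓝 b)} := fun j => by
    simpa only [Set.mem_ofPred_eq, mul_assoc] using (hez j).mul_const a
  have ha : a ∈ closure (convexHull ℝ (Set.range fun j => z j * a)) :=
    (convex_convexHull ℝ _).mem_closure_of_forall_tendsto_dual (𝕜 := ℂ)
      (fun j => subset_convexHull ℝ _ (Set.mem_range_self j)) (h_z_mul · a)
  exact closure_minimal (convexHull_min (Set.range_subset_iff.2 hmem)
    (convex_setOf_tendsto_mul_left e)) (isClosed_setOf_tendsto_mul_left he) ha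

end Net

theorem hasBAI_of_tendsto_dual {ι : Type} {l : Filter ι} [l.NeBot] {z : ι → A} {C : ℝ}
    (hzC : ∀ i, ‖z i‖ ≤ C)
    (h_mul_z : ∀ (f : StrongDual ℂ A) a, Tendsto (fun i => f (a * z i)) l (𝓝 (f a)))
    (h_z_mul : ∀ (f : StrongDual ℂ A) a, Tendsto (fun i => f (z i * a)) l (𝓝 (f a))) :
    HasBAI A := by
  classical
  -- The index type of a `BddNet` must lie in `Type`, which rules out `Finset A × ℕ`; it suffices
  -- to approximate a unit on the `z j`, by `tendsto_mul_right_of_tendsto_dual`.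
  choose e he_mem he using fun (J : Finset ι) (n : ℕ) =>
    exists_mem_convexHull_forall_norm_mul_sub_lt h_mul_z h_z_mul (J.image z)
      (Nat.one_div_pos_of_nat (n := n) (α := ℝ))
  have heC : ∀ p : Finset ι × ℕ, ‖e p.1 p.2‖ ≤ C := fun p => by
    simpa using convexHull_min (Set.range_subset_iff.2 fun i => by simpa using hzC i)
      (convex_closedBall (0 : A) C) (he_mem p.1 p.2)
  have hsmall (j : ι) : ∀ᶠ p : Finset ι × ℕ in atTop,
      ‖z j * e p.1 p.2 - z j‖ < 1 / (p.2 + 1) ∧ ‖e p.1 p.2 * z j - z j‖ < 1 / (p.2 + 1) :=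
    (eventually_ge_atTop ({j}, 0)).mono fun p hp =>
      he p.1 p.2 _ (Finset.mem_image_of_mem z (hp.1 (Finset.mem_singleton_self j)))
  have hvanish : Tendsto (fun p : Finset ι × ℕ => 1 / ((p.2 : ℝ) + 1)) atTop (𝓝 0) := by
    rw [← prod_atTop_atTop_eq]
    exact tendsto_one_div_add_atTop_nhds_zero_nat.comp tendsto_snd
  refine ⟨⟨Finset ι × ℕ, fun p => e p.1 p.2, C, heC⟩, fun a => ⟨?_, ?_⟩⟩
  · refine tendsto_mul_right_of_tendsto_dual h_mul_z heC (fun j => ?_) a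
    exact tendsto_iff_norm_sub_tendsto_zero.2 <|
      squeeze_zero' (.of_forall fun _ => norm_nonneg _) ((hsmall j).mono fun _ hp => hp.1.le)
        hvanish
  · refine tendsto_mul_left_of_tendsto_dual h_z_mul heC (fun j => ?_) a
    exact tendsto_iff_norm_sub_tendsto_zero.2 <|
      squeeze_zero' (.of_forall fun _ => norm_nonneg _) ((hsmall j).mono fun _ hp => hp.2.le)
        hvanish

end ApproximateIdentity

section DualRepresentation

variable {𝕜 E F : Type*} [RCLike 𝕜] [NormedAddCommGroup E] [NormedSpace 𝕜 E]
  [NormedAddCommGroup F] [NormedSpace 𝕜 F] {Φ : StrongDual 𝕜 F → StrongDual 𝕜 E}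

theorem norm_le_of_forall_dual_eq (hΦ : ∀ f u, ‖Φ f u‖ ≤ ‖f‖ * ‖u‖) {u : E} {x : F}
    (hx : ∀ f, f x = Φ f u) : ‖x‖ ≤ ‖u‖ :=
  NormedSpace.norm_le_dual_bound 𝕜 x (norm_nonneg u) fun f =>
    (hx f ▸ hΦ f u).trans_eq (mul_comm _ _)

theorem exists_forall_dual_eq_of_dense_span [CompleteSpace F]
    (hΦ : ∀ f u, ‖Φ f u‖ ≤ ‖f‖ * ‖u‖) {s : Set E} (hs : Dense (Submodule.span 𝕜 s : Set E))
    (hsΦ : ∀ u ∈ s, ∃ x : F, ∀ f, f x = Φ f u) (u : E) : ∃ x : F, ∀ f, f x = Φ f u := by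
  let V : Submodule 𝕜 E :=
    { carrier := {u | ∃ x : F, ∀ f, f x = Φ f u}
      add_mem' := fun ⟨x, hx⟩ ⟨y, hy⟩ => ⟨x + y, fun f => by simp [hx, hy]⟩
      zero_mem' := ⟨0, fun f => by simp⟩
      smul_mem' := fun c _ ⟨x, hx⟩ => ⟨c • x, fun f => by simp [hx]⟩ }
  have hV : IsClosed (V : Set E) := by
    refine IsSeqClosed.isClosed fun v y hv hy => ?_
    choose x hx using hv
    have hdist (m n : ℕ) : dist (x m) (x n) ≤ dist (v m) (v n) := by
      rw [dist_eq_norm, dist_eq_norm]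
      exact norm_le_of_forall_dual_eq hΦ fun f => by simp [hx]
    obtain ⟨b, hb0, hb, hb_lim⟩ := cauchySeq_iff_le_tendsto_0.1 hy.cauchySeq
    obtain ⟨x', hx'⟩ := cauchySeq_tendsto_of_complete <| cauchySeq_iff_le_tendsto_0.2
      ⟨b, hb0, fun m n N hm hn => (hdist m n).trans (hb m n N hm hn), hb_lim⟩
    refine ⟨x', fun f => tendsto_nhds_unique ((f.continuous.tendsto x').comp hx') ?_⟩
    simpa only [Function.comp_def, hx] using ((Φ f).continuous.tendsto y).comp hy
  exact hV.closure_subset_iff.2 (Submodule.span_le.2 hsΦ) (hs u)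

theorem exists_continuousLinearMap_dual_comp_eq [CompleteSpace F]
    (hΦ : ∀ f u, ‖Φ f u‖ ≤ ‖f‖ * ‖u‖) {s : Set E} (hs : Dense (Submodule.span 𝕜 s : Set E))
    (hsΦ : ∀ u ∈ s, ∃ x : F, ∀ f, f x = Φ f u) : ∃ π : E →L[𝕜] F, ∀ f, f ∘L π = Φ f := by
  choose π hπ using exists_forall_dual_eq_of_dense_span hΦ hs hsΦ
  let πₗ : E →ₗ[𝕜] F :=
    { toFun := π
      map_add' := fun u v => (SeparatingDual.eq_iff_forall_dual_eq (R := 𝕜)).2 fun f => by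
        simp [hπ]
      map_smul' := fun c u => (SeparatingDual.eq_iff_forall_dual_eq (R := 𝕜)).2 fun f => by
        simp [hπ] }
  exact ⟨πₗ.mkContinuous 1 fun u =>
      (norm_le_of_forall_dual_eq hΦ (hπ u)).trans_eq (one_mul _).symm,
    fun f => ContinuousLinearMap.ext fun u => hπ u f⟩

end DualRepresentation

section TensorProduct

variable {A T : Type*} [NonUnitalNormedRing A] [NormedSpace ℂ A] [IsScalarTower ℂ A A]
  [SMulCommClass ℂ A A]

noncomputable def mulUnopForm (f : StrongDual ℂ A) : A →L[ℂ] Aᵐᵒᵖ →L[ℂ] ℂ :=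
  LinearMap.mkContinuous₂
    (LinearMap.mk₂ ℂ (fun a b => f (a * unop b))
      (fun a a' b => by simp [add_mul]) (fun c a b => by simp [smul_mul_assoc])
      (fun a b b' => by simp [mul_add]) (fun c a b => by simp [mul_smul_comm]))
    ‖f‖ fun a b => calc
      ‖f (a * unop b)‖ ≤ ‖f‖ * (‖a‖ * ‖unop b‖) := f.le_opNorm_of_le (norm_mul_le _ _)
      _ = ‖f‖ * ‖a‖ * ‖b‖ := by rw [norm_unop, mul_assoc]

@[simp]
theorem mulUnopForm_apply (f : StrongDual ℂ A) (a : A) (b : Aᵐᵒᵖ) :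
    mulUnopForm f a b = f (a * unop b) :=
  rfl

theorem norm_mulUnopForm_le (f : StrongDual ℂ A) : ‖mulUnopForm f‖ ≤ ‖f‖ :=
  LinearMap.mkContinuous₂_norm_le _ (norm_nonneg f) _

variable [NonUnitalNormedRing T] [NormedSpace ℂ T] [CompleteSpace T]

theorem IsProjTensorProduct.exists_mulMap [CompleteSpace A]
    (P : IsProjTensorProduct A Aᵐᵒᵖ T) : ∃ π : T →L[ℂ] A, ∀ a b, π (P.ι a b) = a * unop b := by
  -- `P.lift` only reaches targets in `Type`, so `A` is accessed through its dual.
  choose Φ hΦι hΦ using fun f =>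
    P.lift ℂ inferInstance inferInstance inferInstance (mulUnopForm f)
  have hΦ_le (f : StrongDual ℂ A) (u : T) : ‖Φ f u‖ ≤ ‖f‖ * ‖u‖ :=
    (Φ f).le_of_opNorm_le ((hΦ f).trans (norm_mulUnopForm_le f)) u
  obtain ⟨π, hπ⟩ := exists_continuousLinearMap_dual_comp_eq hΦ_le P.dense_span
    (by rintro _ ⟨⟨a, b⟩, rfl⟩; exact ⟨a * unop b, fun f => (hΦι f a b).symm⟩)
  refine ⟨π, fun a b => (SeparatingDual.eq_iff_forall_dual_eq (R := ℂ)).2 fun f => ?_⟩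
  rw [← ContinuousLinearMap.comp_apply, hπ, hΦι, mulUnopForm_apply]

theorem IsProjTensorProduct.map_ι_op_mul [IsScalarTower ℂ T T] [SMulCommClass ℂ T T]
    (P : IsProjTensorProduct A Aᵐᵒᵖ T) {π : T →L[ℂ] A} (hπ : ∀ a b, π (P.ι a b) = a * unop b)
    (a b : A) (u : T) : π (P.ι a (op b) * u) = a * π u * b := by
  have : π ∘L ContinuousLinearMap.mul ℂ T (P.ι a (op b)) =
      ContinuousLinearMap.mul ℂ A a ∘L (ContinuousLinearMap.mul ℂ A).flip b ∘L π := by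
    refine ContinuousLinearMap.ext_on P.dense_span ?_
    rintro _ ⟨⟨c, d⟩, rfl⟩
    simp [P.ι_mul, hπ, mul_assoc]
  simpa [mul_assoc] using congr($this u)

end TensorProduct

/-- if `A ⊗̂ Aᵒᵖ` has a bounded approximate identity and both the
topology of the seminorms `ρ_a(b) = ‖ab‖` and that of `γ_a(b) = ‖ba‖` are stronger
(finer) than the weak topology on `A`, then `A` has a two-sided bounded approximate
identity. -/
theorem stmt4 {A T : Type*} [NonUnitalNormedRing A] [NormedSpace ℂ A] [IsScalarTower ℂ A A] [SMulCommClass ℂ A A] [CompleteSpace A] [NonUnitalNormedRing T] [NormedSpace ℂ T] [IsScalarTower ℂ T T] [SMulCommClass ℂ T T] [CompleteSpace T]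
    (P : IsProjTensorProduct A Aᵐᵒᵖ T) (hT : HasBAI T)
    (hρ : (SeminormFamily.moduleFilterBasis
        ((fun a : A => (normSeminorm ℂ A).comp (LinearMap.mulLeft ℂ a)) : SeminormFamily ℂ A A)).topology ≤ TopologicalSpace.induced (fun (a : A) (f : A →L[ℂ] ℂ) => f a) Pi.topologicalSpace)
    (hγ : (SeminormFamily.moduleFilterBasis
        ((fun a : A => (normSeminorm ℂ A).comp (LinearMap.mulRight ℂ a)) : SeminormFamily ℂ A A)).topology ≤ TopologicalSpace.induced (fun (a : A) (f : A →L[ℂ] ℂ) => f a) Pi.topologicalSpace) :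
    HasBAI A := by
  obtain ⟨S, hS⟩ := hT
  obtain ⟨π, hπ⟩ := P.exists_mulMap
  have hz (a b : A) : Tendsto (fun i => a * π (S.z i) * b) S.filter (𝓝 (a * b)) := by
    simpa [Function.comp_def, P.map_ι_op_mul hπ, hπ] using
      (π.continuous.tendsto _).comp (hS (P.ι a (op b))).1
  refine hasBAI_of_tendsto_dual (l := S.filter) (C := ‖π‖ * S.C)
    (fun i => π.le_opNorm_of_le (S.bdd i))
    (fun f a => tendsto_dual_of_seminormFamily_topology_le _ hγ (fun c => ?_) f)
    (fun f a => tendsto_dual_of_seminormFamily_topology_le _ hρ (fun c => ?_) f)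
  · simpa [sub_mul] using tendsto_iff_norm_sub_tendsto_zero.1 (hz a c)
  · simpa [mul_sub, mul_assoc] using tendsto_iff_norm_sub_tendsto_zero.1 (hz c a)
end

section
/- Let B be a Banach algebra, A a closed subalgebra, λ̃ ∈ B* a continuous linear functional vanishing on the linear span of {ab : a, b ∈ A}. Then the bounded linear map D : A ⊗̂ B → (A ⊗̂ B)* determined by D(a ⊗ b) = λ̃(a)λ̃(b)·(λ̃ ⊗ λ̃), where (λ̃ ⊗ λ̃)(c ⊗ d) = λ̃(c)λ̃(d), is a continuous derivation into the dual bimodule, and moreover x·D(y) = 0 and D(x)·y = 0 for all x, y ∈ A ⊗̂ B. -/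
open Filter Topology MulOpposite

/-!
On elementary tensors `D (a ⊗ b) (c ⊗ d) = λ̃(ja) λ̃(b) λ̃(jc) λ̃(d)`, and `λ̃ ∘ j` kills products
in `A`, so `D` vanishes as soon as either argument is an elementary tensor `(ac) ⊗ d`. Since
`(a ⊗ b)(c ⊗ d) = ac ⊗ bd` and elementary tensors span a dense subspace, continuity and
bilinearity give `D (uv) = 0` and `D u (vx) = 0` for all `u, v, x`; the derivation identity
then reads `0 = 0 + 0`.
-/

namespace IsProjTensorProduct

variable {A B T E : Type*} [NonUnitalNormedRing A] [NormedSpace ℂ A]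
  [NonUnitalNormedRing B] [NormedSpace ℂ B] [NonUnitalNormedRing T] [NormedSpace ℂ T]
  [CompleteSpace T] [NormedAddCommGroup E] [NormedSpace ℂ E]
  (P : IsProjTensorProduct A B T)

theorem continuousLinearMap_ext {f g : T →L[ℂ] E} (h : ∀ a b, f (P.ι a b) = g (P.ι a b)) :
    f = g :=
  ContinuousLinearMap.ext_on P.dense_span (by rintro _ ⟨p, rfl⟩; exact h p.1 p.2)

theorem continuousLinearMap_ext₂ {φ ψ : T →L[ℂ] T →L[ℂ] E}
    (h : ∀ a b c d, φ (P.ι a b) (P.ι c d) = ψ (P.ι a b) (P.ι c d)) : φ = ψ :=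
  P.continuousLinearMap_ext fun a b => P.continuousLinearMap_ext (h a b)

theorem map_mul_eq_zero [IsScalarTower ℂ T T] [SMulCommClass ℂ T T] (F : T →L[ℂ] E)
    (hF : ∀ a c d, F (P.ι (a * c) d) = 0) (v x : T) : F (v * x) = 0 := by
  have hFmul : (ContinuousLinearMap.compL ℂ T T E F).comp (ContinuousLinearMap.mul ℂ T) = 0 :=
    P.continuousLinearMap_ext₂ fun a b c d => by simp [P.ι_mul, hF]
  simpa using congr($hFmul v x)

end IsProjTensorProduct

theorem stmt11_general {A B T : Type*} [NonUnitalNormedRing A] [NormedSpace ℂ A] [NonUnitalNormedRing B] [NormedSpace ℂ B] [NonUnitalNormedRing T] [NormedSpace ℂ T] [IsScalarTower ℂ T T] [SMulCommClass ℂ T T] [CompleteSpace T]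
    (j : A →L[ℂ] B)
    (hj_mul : ∀ a b : A, j (a * b) = j a * j b)
    (lam : B →L[ℂ] ℂ) (hlam : ∀ a b : A, lam (j a * j b) = 0)
    (P : IsProjTensorProduct A B T)
    (D : T →L[ℂ] (T →L[ℂ] ℂ))
    (hD : ∀ (a c : A) (b d : B),
      D (P.ι a b) (P.ι c d) = lam (j a) * lam b * (lam (j c) * lam d)) :
    (∀ u v x : T, D (u * v) x = D v (x * u) + D u (v * x)) ∧
    (∀ u v x : T, D v (x * u) = 0) ∧
    (∀ u v x : T, D u (v * x) = 0) := by
  have hD_left (a c : A) (d : B) : D (P.ι (a * c) d) = 0 :=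
    P.continuousLinearMap_ext fun a' b' => by simp [hD, hj_mul, hlam]
  have hD_right (u : T) (a c : A) (d : B) : D u (P.ι (a * c) d) = 0 := by
    have : (ContinuousLinearMap.apply ℂ ℂ (P.ι (a * c) d)).comp D = 0 :=
      P.continuousLinearMap_ext fun a' b' => by simp [hD, hj_mul, hlam]
    simpa using congr($this u)
  have hD_mul_left (u v : T) : D (u * v) = 0 := P.map_mul_eq_zero D hD_left u v
  have hD_mul_right (u v x : T) : D u (v * x) = 0 := P.map_mul_eq_zero (D u) (hD_right u) v x
  refine ⟨fun u v x => ?_, fun u v x => hD_mul_right v x u, hD_mul_right⟩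
  simp [hD_mul_left, hD_mul_right]

/-- if `λ̃ ∈ B*` vanishes on products of elements of the closed
subalgebra `A` of `B`, then the bounded linear map `D : A ⊗̂ B → (A ⊗̂ B)*` determined
by `D(a⊗b) = λ̃(a)λ̃(b)(λ̃⊗λ̃)` is a continuous derivation into the dual bimodule, and
moreover `x·D(y) = 0` and `D(x)·y = 0` for all `x, y`. -/
theorem stmt11 {A B T : Type*} [NonUnitalNormedRing A] [NormedSpace ℂ A] [IsScalarTower ℂ A A] [SMulCommClass ℂ A A] [CompleteSpace A] [NonUnitalNormedRing B] [NormedSpace ℂ B] [IsScalarTower ℂ B B] [SMulCommClass ℂ B B] [CompleteSpace B] [NonUnitalNormedRing T] [NormedSpace ℂ T] [IsScalarTower ℂ T T] [SMulCommClass ℂ T T] [CompleteSpace T]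
    (j : A →L[ℂ] B) (hj_iso : ∀ a : A, ‖j a‖ = ‖a‖)
    (hj_mul : ∀ a b : A, j (a * b) = j a * j b)
    (lam : B →L[ℂ] ℂ) (hlam : ∀ a b : A, lam (j a * j b) = 0)
    (P : IsProjTensorProduct A B T)
    (D : T →L[ℂ] (T →L[ℂ] ℂ))
    (hD : ∀ (a c : A) (b d : B),
      D (P.ι a b) (P.ι c d) = lam (j a) * lam b * (lam (j c) * lam d)) :
    (∀ u v x : T, D (u * v) x = D v (x * u) + D u (v * x)) ∧
    (∀ u v x : T, D v (x * u) = 0) ∧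
    (∀ u v x : T, D u (v * x) = 0) :=
  stmt11_general j hj_mul lam hlam P D hD
end
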